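/- arXiv:1703.01869 — 4 statements merged into one kernel-verified Lean document; each statement's English description precedes it below -/
import Mathlib

section
/- Let H = (ℤ/2ℤ)^7 / ⟨a₁a₂a₃a₄a₅a₆a₇⟩ be the group generated by involutions a₁,…,a₇ subject to the single relation a₁a₂a₃a₄a₅a₆a₇ = 1 (so H ≅ (ℤ/2ℤ)^6), and let λ be the automorphism of H induced by the cyclic permutation aⱼ ↦ a_{j+1} (indices mod 7). Then the only subgroups of H invariant under λ are: the trivial subgroup, H itself, K = ⟨a₁a₃a₇, a₂a₃a₅, a₁a₂a₄⟩, and K* = ⟨a₁a₂a₆, a₂a₃a₇, a₁a₃a₄⟩. -/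
/-!
As a module over `𝔽₂[λ]`, `H ≅ 𝔽₂[x]/(x⁶ + ⋯ + x + 1)` with
`x⁶ + ⋯ + x + 1 = (x³ + x + 1)(x³ + x² + 1)`, so `H = K ⊕ K*` with `K`, `K*` two copies of `𝔽₈`
on which `λ` acts as multiplication by an element of order 7. Thus the nonzero elements of each
summand form a single `λ`-orbit, and an invariant subgroup meets each summand trivially or
contains it. Since `λ + λ² + λ⁴` is the projection of `H` onto `K` along `K*`, every invariant
subgroup is the sum of these two intersections.
-/

/-- The ambient elementary abelian 2-group `(ℤ/2)^7`. -/
abbrev V : Type := Fin 7 → ZMod 2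

/-- The all-ones vector, corresponding to the word `a₁a₂a₃a₄a₅a₆a₇`. -/
def allOnes : V := fun _ => 1

/-- The subgroup generated by `a₁a₂a₃a₄a₅a₆a₇`. -/
def W : AddSubgroup V := AddSubgroup.closure {allOnes}

/-- The group `H = (ℤ/2)^7 / ⟨a₁⋯a₇⟩ ≅ (ℤ/2)^6`. -/
abbrev H : Type := V ⧸ W

/-- The generators `a₁, …, a₇` of `H` (0-indexed: `a j` is `a_{j+1}`). -/
def a (j : Fin 7) : H := QuotientAddGroup.mk (Pi.single j 1)

/-- The automorphism of `V` induced by a permutation of the seven indices,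
sending the basis vector `e_j` to `e_{c j}`. -/
def permV (c : Equiv.Perm (Fin 7)) : V ≃+ V where
  toFun v := v ∘ c.symm
  invFun v := v ∘ c
  left_inv v := by funext i; simp
  right_inv v := by funext i; simp
  map_add' v w := rfl

lemma permV_W (c : Equiv.Perm (Fin 7)) :
    W.map (permV c).toAddMonoidHom = W := by
  unfold W
  rw [AddMonoidHom.map_closure, Set.image_singleton]
  rfl

/-- The 7-cycle `j ↦ j+1` on indices. -/
def cLam : Equiv.Perm (Fin 7) := Equiv.addRight 1

/-- The permutation `(1 2)(3 7)(4 6)` of indices (0-indexed `(0 1)(2 6)(3 5)`). -/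
def cZeta : Equiv.Perm (Fin 7) :=
  ⟨![1,0,6,5,4,3,2], ![1,0,6,5,4,3,2], by decide, by decide⟩

/-- The automorphism `λ` of `H`, `a_j ↦ a_{j+1 (mod 7)}`. -/
def lam : H ≃+ H := QuotientAddGroup.congr W W (permV cLam) (permV_W cLam)

/-- The automorphism `ζ` of `H`. -/
def zeta : H ≃+ H := QuotientAddGroup.congr W W (permV cZeta) (permV_W cZeta)

/-- `K = ⟨a₁a₃a₇, a₂a₃a₅, a₁a₂a₄⟩`. -/
def Ksub : AddSubgroup H :=
  AddSubgroup.closure {a 0 + a 2 + a 6, a 1 + a 2 + a 4, a 0 + a 1 + a 3}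

/-- `K* = ⟨a₁a₂a₆, a₂a₃a₇, a₁a₃a₄⟩`. -/
def KsubStar : AddSubgroup H :=
  AddSubgroup.closure {a 0 + a 1 + a 5, a 1 + a 2 + a 6, a 0 + a 2 + a 3}

namespace AddSubgroup

variable {G : Type*} [AddCommGroup G] {e : G ≃+ G} {K A B : AddSubgroup G}

theorem mapsTo_of_map_eq (hK : K.map e.toAddMonoidHom = K) : Set.MapsTo e K K :=
  fun _ hx => hK ▸ mem_map_of_mem _ hx

theorem mapsTo_symm_of_map_eq (hK : K.map e.toAddMonoidHom = K) : Set.MapsTo e.symm K K :=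
  fun _ hx => mem_map_equiv.1 (hK.symm ▸ hx)

theorem map_eq_of_mapsTo [Finite G] (h : Set.MapsTo e K K) : K.map e.toAddMonoidHom = K :=
  eq_of_le_of_card_ge (map_le_iff_le_comap.2 fun _ hx => h hx)
    (card_map_of_injective e.injective).ge

theorem map_closure_eq_of_forall_mem [Finite G] {S : Set G} (h : ∀ x ∈ S, e x ∈ closure S) :
    (closure S).map e.toAddMonoidHom = closure S :=
  map_eq_of_mapsTo fun _ hx => (closure_le (closure S |>.comap e.toAddMonoidHom)).2 h hx

theorem le_of_subset_orbit (hK : K.map e.toAddMonoidHom = K) {u : G}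
    (hA : (A : Set G) ⊆ insert 0 (Set.range fun n => e^[n] u)) {x : G} (hxK : x ∈ K)
    (hxA : x ∈ A) (hx : x ≠ 0) : A ≤ K := by
  obtain ⟨i, rfl⟩ := (hA hxA).resolve_left hx
  have hu : u ∈ K := by
    have hinv : Function.LeftInverse e.symm e := e.symm_apply_apply
    simpa only [hinv.iterate i u, SetLike.mem_coe] using (mapsTo_symm_of_map_eq hK).iterate i hxK
  intro y hy
  obtain rfl | ⟨n, rfl⟩ := hA hy
  · exact zero_mem K
  · exact (mapsTo_of_map_eq hK).iterate n hu

theorem inf_eq_bot_or_inf_eq_of_subset_orbit (hK : K.map e.toAddMonoidHom = K) {u : G}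
    (hA : (A : Set G) ⊆ insert 0 (Set.range fun n => e^[n] u)) : K ⊓ A = ⊥ ∨ K ⊓ A = A := by
  refine (bot_or_exists_ne_zero (K ⊓ A)).imp_right fun ⟨x, hx, hx0⟩ => ?_
  exact inf_eq_right.2 (le_of_subset_orbit hK hA hx.1 hx.2 hx0)

def iterateSum (e : G ≃+ G) (s : Finset ℕ) (x : G) : G :=
  ∑ n ∈ s, e^[n] x

theorem iterateSum_mem (hK : K.map e.toAddMonoidHom = K) (s : Finset ℕ) {x : G} (hx : x ∈ K) :
    iterateSum e s x ∈ K :=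
  sum_mem fun n _ => (mapsTo_of_map_eq hK).iterate n hx

theorem map_eq_self_iff_of_subset_orbit {u v : G} {s : Finset ℕ}
    (hA : A.map e.toAddMonoidHom = A) (hB : B.map e.toAddMonoidHom = B)
    (hAu : (A : Set G) ⊆ insert 0 (Set.range fun n => e^[n] u))
    (hBv : (B : Set G) ⊆ insert 0 (Set.range fun n => e^[n] v))
    (hsA : ∀ x, iterateSum e s x ∈ A) (hsB : ∀ x, x - iterateSum e s x ∈ B) (K : AddSubgroup G) :
    K.map e.toAddMonoidHom = K ↔ K = ⊥ ∨ K = ⊤ ∨ K = A ∨ K = B := by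
  have hsplit {A' B' : AddSubgroup G} {x : G} (hA' : iterateSum e s x ∈ A')
      (hB' : x - iterateSum e s x ∈ B') : x ∈ A' ⊔ B' :=
    mem_sup.2 ⟨_, hA', _, hB', add_sub_cancel _ _⟩
  constructor
  · intro hK
    have hdecomp : K = K ⊓ A ⊔ K ⊓ B :=
      le_antisymm (fun x hx => hsplit (mem_inf.2 ⟨iterateSum_mem hK s hx, hsA x⟩)
        (mem_inf.2 ⟨sub_mem hx (iterateSum_mem hK s hx), hsB x⟩)) (sup_le inf_le_left inf_le_left)
    have htop : A ⊔ B = ⊤ := eq_top_iff.2 fun x _ => hsplit (hsA x) (hsB x)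
    rcases inf_eq_bot_or_inf_eq_of_subset_orbit hK hAu with hKA | hKA <;>
      rcases inf_eq_bot_or_inf_eq_of_subset_orbit hK hBv with hKB | hKB <;>
      rw [hKA, hKB] at hdecomp <;> simp [hdecomp, htop]
  · rintro (rfl | rfl | rfl | rfl)
    · exact map_bot _
    · exact map_top_of_surjective _ e.surjective
    · exact hA
    · exact hB

end AddSubgroup

section Orbit

variable {G : Type*} [AddCommGroup G]

abbrev IsZeroOrIterate (f : G → G) (m : ℕ) (u x : G) : Prop :=
  x = 0 ∨ ∃ n : Fin m, f^[n] u = x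

theorem IsZeroOrIterate.mem_range {f : G → G} {m : ℕ} {u x : G} (h : IsZeroOrIterate f m u x) :
    x ∈ insert 0 (Set.range fun n => f^[n] u) :=
  h.imp_right fun ⟨n, hn⟩ => ⟨n, hn⟩

theorem closure_subset_of_isZeroOrIterate {f : G → G} {m : ℕ} {u : G} {S : Set G}
    (hS : ∀ x ∈ S, IsZeroOrIterate f m u x)
    (hadd : ∀ i j : Fin m, IsZeroOrIterate f m u (f^[i] u + f^[j] u))
    (hneg : ∀ i : Fin m, IsZeroOrIterate f m u (-f^[i] u)) :
    (AddSubgroup.closure S : Set G) ⊆ insert 0 (Set.range fun n => f^[n] u) := by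
  intro x hx
  refine IsZeroOrIterate.mem_range (m := m) ?_
  induction hx using AddSubgroup.closure_induction with
  | mem x hx => exact hS x hx
  | zero => exact .inl rfl
  | add x y _ _ hx hy =>
    obtain rfl | ⟨i, rfl⟩ := hx
    · simpa only [zero_add] using hy
    obtain rfl | ⟨j, rfl⟩ := hy
    · exact .inr ⟨i, (add_zero _).symm⟩
    exact hadd i j
  | neg x _ hx =>
    obtain rfl | ⟨i, rfl⟩ := hx
    · exact .inl neg_zero
    · exact hneg i

theorem IsZeroOrIterate.mem {e : G ≃+ G} {K : AddSubgroup G} {m : ℕ} {u x : G}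
    (hK : K.map e.toAddMonoidHom = K) (hu : u ∈ K) (h : IsZeroOrIterate e m u x) : x ∈ K := by
  obtain rfl | ⟨n, rfl⟩ := h
  · exact zero_mem K
  · exact (AddSubgroup.mapsTo_of_map_eq hK).iterate n hu

end Orbit

theorem mem_W_iff {v : V} : v ∈ W ↔ v = 0 ∨ v = allOnes := by
  rw [W, AddSubgroup.mem_closure_singleton]
  constructor
  · rintro ⟨n, rfl⟩
    have h : n • allOnes = fun _ => (n : ZMod 2) := by ext; simp [allOnes]
    rw [h]
    generalize (n : ZMod 2) = c
    fin_cases c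
    · exact .inl rfl
    · exact .inr rfl
  · rintro (rfl | rfl)
    exacts [⟨0, zero_zsmul _⟩, ⟨1, one_zsmul _⟩]

instance : DecidablePred (· ∈ W) := fun _ => decidable_of_iff _ mem_W_iff.symm

-- Mathlib's `DecidableEq (α ⧸ s)` is built with `rw`, which blocks kernel reduction in `decide`.
instance : DecidableEq H :=
  @Quotient.decidableEq _ (QuotientAddGroup.leftRel W) fun u v =>
    decidable_of_iff (-u + v ∈ W) QuotientAddGroup.leftRel_apply.symm

theorem map_lam_Ksub : Ksub.map lam.toAddMonoidHom = Ksub := by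
  refine AddSubgroup.map_closure_eq_of_forall_mem ?_
  rintro _ (rfl | rfl | rfl)
  · rw [show lam (a 0 + a 2 + a 6) = a 0 + a 1 + a 3 by decide +kernel]
    exact AddSubgroup.subset_closure (by simp)
  · rw [show lam (a 1 + a 2 + a 4) = (a 0 + a 2 + a 6) + (a 1 + a 2 + a 4) by decide +kernel]
    exact add_mem (AddSubgroup.subset_closure (by simp)) (AddSubgroup.subset_closure (by simp))
  · rw [show lam (a 0 + a 1 + a 3) = a 1 + a 2 + a 4 by decide +kernel]
    exact AddSubgroup.subset_closure (by simp)

theorem Ksub_subset_orbit :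
    (Ksub : Set H) ⊆ insert 0 (Set.range fun n => lam^[n] (a 0 + a 2 + a 6)) :=
  closure_subset_of_isZeroOrIterate (m := 7) (by rintro _ (rfl | rfl | rfl) <;> decide +kernel)
    (by decide +kernel) (by decide +kernel)

theorem map_lam_KsubStar : KsubStar.map lam.toAddMonoidHom = KsubStar := by
  refine AddSubgroup.map_closure_eq_of_forall_mem ?_
  rintro _ (rfl | rfl | rfl)
  · rw [show lam (a 0 + a 1 + a 5) = a 1 + a 2 + a 6 by decide +kernel]
    exact AddSubgroup.subset_closure (by simp)
  · rw [show lam (a 1 + a 2 + a 6) = a 0 + a 2 + a 3 by decide +kernel]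
    exact AddSubgroup.subset_closure (by simp)
  · rw [show lam (a 0 + a 2 + a 3) = (a 0 + a 1 + a 5) + (a 1 + a 2 + a 6) by decide +kernel]
    exact add_mem (AddSubgroup.subset_closure (by simp)) (AddSubgroup.subset_closure (by simp))

theorem KsubStar_subset_orbit :
    (KsubStar : Set H) ⊆ insert 0 (Set.range fun n => lam^[n] (a 0 + a 1 + a 5)) :=
  closure_subset_of_isZeroOrIterate (m := 7) (by rintro _ (rfl | rfl | rfl) <;> decide +kernel)
    (by decide +kernel) (by decide +kernel)

theorem iterateSum_mem_Ksub (x : H) : AddSubgroup.iterateSum lam {1, 2, 4} x ∈ Ksub := by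
  have h : ∀ v : V, IsZeroOrIterate lam 7 (a 0 + a 2 + a 6)
      (AddSubgroup.iterateSum lam {1, 2, 4} (QuotientAddGroup.mk v)) := by
    decide +kernel
  induction x using QuotientAddGroup.induction_on with
  | H v => exact (h v).mem map_lam_Ksub (AddSubgroup.subset_closure (by simp))

theorem sub_iterateSum_mem_KsubStar (x : H) :
    x - AddSubgroup.iterateSum lam {1, 2, 4} x ∈ KsubStar := by
  have h : ∀ v : V, IsZeroOrIterate lam 7 (a 0 + a 1 + a 5)
      (QuotientAddGroup.mk v - AddSubgroup.iterateSum lam {1, 2, 4} (QuotientAddGroup.mk v)) := by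
    decide +kernel
  induction x using QuotientAddGroup.induction_on with
  | H v => exact (h v).mem map_lam_KsubStar (AddSubgroup.subset_closure (by simp))

/-- The only `λ`-invariant subgroups of `H` are the trivial subgroup, `H` itself,
`K = ⟨a₁a₃a₇, a₂a₃a₅, a₁a₂a₄⟩` and `K* = ⟨a₁a₂a₆, a₂a₃a₇, a₁a₃a₄⟩`. -/
theorem lambda_invariant_subgroups (K : AddSubgroup H) :
    K.map lam.toAddMonoidHom = K ↔
      K = ⊥ ∨ K = ⊤ ∨ K = Ksub ∨ K = KsubStar :=
  AddSubgroup.map_eq_self_iff_of_subset_orbit map_lam_Ksub map_lam_KsubStar Ksub_subset_orbit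
    KsubStar_subset_orbit iterateSum_mem_Ksub sub_iterateSum_mem_KsubStar K
end

section
/- In the group H ≅ (ℤ/2ℤ)^6 generated by a₁,…,a₇ with relation a₁⋯a₇ = 1, if a subgroup K is invariant under λ: aⱼ ↦ a_{j+1 mod 7} and contains a₁a₂a₃, then K = H. -/
lemma permV_single (c : Equiv.Perm (Fin 7)) (j : Fin 7) (x : ZMod 2) :
    permV c (Pi.single j x) = Pi.single (c j) x := by
  show Pi.single j x ∘ c.symm = _
  rw [Pi.single_comp_equiv, Equiv.symm_symm]

lemma lam_a (j : Fin 7) : lam (a j) = a (j + 1) :=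
  congrArg QuotientAddGroup.mk (permV_single cLam j 1)

def consecutiveTriple (j : Fin 7) : H := a j + a (j + 1) + a (j + 2)

lemma lam_consecutiveTriple (j : Fin 7) :
    lam (consecutiveTriple j) = consecutiveTriple (j + 1) := by
  simp only [consecutiveTriple, map_add, lam_a, add_right_comm j 2 1]

lemma Set.MapsTo.forall_mem_of_shift {β : Type*} {f : β → β} {s : Set β} (hf : Set.MapsTo f s s)
    {m : ℕ} {g : Fin (m + 1) → β} (hg : ∀ j, f (g j) = g (j + 1)) (h0 : g 0 ∈ s) (j : Fin (m + 1)) :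
    g j ∈ s := by
  induction j using Fin.induction with
  | zero => exact h0
  | succ i ih => simpa only [hg, Fin.coeSucc_eq_succ] using hf ih

lemma AddSubgroup.closure_range_single_one (n : ℕ) (ι : Type*) [Fintype ι] [DecidableEq ι] :
    AddSubgroup.closure (Set.range fun i : ι => Pi.single i (1 : ZMod n)) = ⊤ := by
  refine eq_top_iff.2 fun v _ => ?_
  rw [← Finset.univ_sum_single v]
  refine sum_mem fun i _ => ?_
  rw [← ZMod.intCast_zmod_cast (v i), ← zsmul_one, Pi.single_smul']
  exact zsmul_mem (AddSubgroup.subset_closure (Set.mem_range_self i)) _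

lemma closure_range_a : AddSubgroup.closure (Set.range a) = ⊤ := by
  have : Set.range a = QuotientAddGroup.mk' W '' Set.range fun j => Pi.single j 1 := by
    rw [← Set.range_comp]; rfl
  rw [this, ← AddMonoidHom.map_closure, AddSubgroup.closure_range_single_one,
    ← AddMonoidHom.range_eq_map, AddMonoidHom.range_eq_top]
  exact QuotientAddGroup.mk'_surjective W

lemma a_zero_eq_sum_consecutiveTriple : a 0 = consecutiveTriple 0 + consecutiveTriple 2 +
    consecutiveTriple 3 + consecutiveTriple 5 + consecutiveTriple 6 :=
  congrArg QuotientAddGroup.mk (by decide : (Pi.single 0 1 : V) = _)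

/-- Any `λ`-invariant subgroup of `H` containing `a₁a₂a₃` equals `H`. -/
theorem lambda_invariant_with_a1a2a3 (K : AddSubgroup H)
    (hinv : K.map lam.toAddMonoidHom = K) (h : a 0 + a 1 + a 2 ∈ K) :
    K = ⊤ := by
  have hK : Set.MapsTo lam K K := AddSubgroup.map_le_iff_le_comap.mp hinv.le
  have htriple : ∀ j, consecutiveTriple j ∈ K := hK.forall_mem_of_shift lam_consecutiveTriple h
  have ha0 : a 0 ∈ K := by
    rw [a_zero_eq_sum_consecutiveTriple]
    exact add_mem (add_mem (add_mem (add_mem (htriple 0) (htriple 2)) (htriple 3)) (htriple 5))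
      (htriple 6)
  have ha : ∀ j, a j ∈ K := hK.forall_mem_of_shift lam_a ha0
  rw [eq_top_iff, ← closure_range_a, AddSubgroup.closure_le]
  rintro _ ⟨j, rfl⟩
  exact ha j
end

section
/- Let ρ = e^{2πi/7}, A(x) = (1+ρ)(x−ρ)/(ρ(x−1)), and set μ₄ = A(ρ³), μ₅ = A(ρ⁴), μ₆ = A(ρ⁵), μ₇ = A(ρ⁶). Then μ₆ = μ₅²/μ₄ and μ₇ = μ₅². -/
/-!
Clearing denominators, each relation becomes a polynomial identity in `ρ` that is a multiple of
`ρ ^ 7 - 1`; so both hold for any primitive 7th root of unity `ζ` in any field, the primitivity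
only keeping the denominators `ζ (ζ ^ k - 1)` and `μ₄` away from zero.
-/

/-- `ρ = e^{2πi/7}`. -/
noncomputable def ρ : ℂ := Complex.exp (2 * Real.pi * Complex.I / 7)

/-- The Möbius transformation `A(x) = (1+ρ)(x−ρ)/(ρ(x−1))`. -/
noncomputable def Amap (x : ℂ) : ℂ := (1 + ρ) * (x - ρ) / (ρ * (x - 1))

/-- The map `A` with `ρ` replaced by any `ζ`; `Amap` is `mobius ρ` by definition. -/
def mobius {K : Type*} [Field K] (ζ x : K) : K := (1 + ζ) * (x - ζ) / (ζ * (x - 1))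

theorem isPrimitiveRoot_ρ : IsPrimitiveRoot ρ 7 := by
  simpa [ρ] using Complex.isPrimitiveRoot_exp 7 (by norm_num)

namespace IsPrimitiveRoot

variable {K : Type*} [Field K] {ζ : K}

theorem pow_sub_one_ne_zero {n k : ℕ} (hζ : IsPrimitiveRoot ζ n) (hk₀ : k ≠ 0) (hk : k < n) :
    ζ ^ k - 1 ≠ 0 :=
  sub_ne_zero.mpr (hζ.pow_ne_one_of_pos_of_lt hk₀ hk)

variable (hζ : IsPrimitiveRoot ζ 7)
include hζ

theorem mobius_pow_five_mul_mobius_pow_three :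
    mobius ζ (ζ ^ 5) * mobius ζ (ζ ^ 3) = mobius ζ (ζ ^ 4) ^ 2 := by
  have h0 := hζ.ne_zero (by norm_num)
  have h3 := hζ.pow_sub_one_ne_zero (k := 3) (by norm_num) (by norm_num)
  have h4 := hζ.pow_sub_one_ne_zero (k := 4) (by norm_num) (by norm_num)
  have h5 := hζ.pow_sub_one_ne_zero (k := 5) (by norm_num) (by norm_num)
  unfold mobius
  field_simp
  linear_combination -ζ ^ 2 * (ζ - 1) * (ζ ^ 2 - 1) ^ 2 * hζ.pow_eq_one

theorem mobius_pow_six : mobius ζ (ζ ^ 6) = mobius ζ (ζ ^ 4) ^ 2 := by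
  have h0 := hζ.ne_zero (by norm_num)
  have h4 := hζ.pow_sub_one_ne_zero (k := 4) (by norm_num) (by norm_num)
  have h6 := hζ.pow_sub_one_ne_zero (k := 6) (by norm_num) (by norm_num)
  unfold mobius
  field_simp
  linear_combination -ζ * (1 + ζ) * (ζ ^ 2 - 1) ^ 2 * hζ.pow_eq_one

theorem mobius_pow_three_ne_zero : mobius ζ (ζ ^ 3) ≠ 0 := by
  have h0 := hζ.ne_zero (by norm_num)
  have h2 := hζ.pow_sub_one_ne_zero (k := 2) (by norm_num) (by norm_num)
  have h3 := hζ.pow_sub_one_ne_zero (k := 3) (by norm_num) (by norm_num)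
  have h_one_add : 1 + ζ ≠ 0 := fun h ↦ h2 (by linear_combination (ζ - 1) * h)
  have h_num : ζ ^ 3 - ζ ≠ 0 := by
    rw [show ζ ^ 3 - ζ = ζ * (ζ ^ 2 - 1) by ring]
    exact mul_ne_zero h0 h2
  exact div_ne_zero (mul_ne_zero h_one_add h_num) (mul_ne_zero h0 h3)

end IsPrimitiveRoot

/-- With `μ₄ = A(ρ³), μ₅ = A(ρ⁴), μ₆ = A(ρ⁵), μ₇ = A(ρ⁶)`, one has
`μ₆ = μ₅²/μ₄` and `μ₇ = μ₅²`. -/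
theorem mu_relations :
    Amap (ρ ^ 5) = (Amap (ρ ^ 4)) ^ 2 / Amap (ρ ^ 3) ∧
    Amap (ρ ^ 6) = (Amap (ρ ^ 4)) ^ 2 := by
  have hρ := isPrimitiveRoot_ρ
  exact ⟨eq_div_of_mul_eq hρ.mobius_pow_three_ne_zero hρ.mobius_pow_five_mul_mobius_pow_three,
    hρ.mobius_pow_six⟩
end

section
/- Let μ₄, μ₅, μ₆, μ₇ ∈ ℂ be pairwise distinct with each μⱼ ∉ {0,1}, and let (x₁,…,x₇) ∈ ℂ⁷ be a nonzero solution of the system x₁²+x₂²+x₃²=0, μ₄x₁²+x₂²+x₄²=0, μ₅x₁²+x₂²+x₅²=0, μ₆x₁²+x₂²+x₆²=0, μ₇x₁²+x₂²+x₇²=0. Then at most one of the coordinates x₁,…,x₇ is zero. -/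
/-!
Put `a = x₀²` and `b = x₁²`. Each equation expresses the square of one further coordinate
through `a` and `b`, so with `c = (0, 1, μ₄, μ₅, μ₆, μ₇)` the coordinate `x_{k+1}` vanishes exactly
when `c k * a + b = 0`, and `x₀` exactly when `a = 0`. These are seven linear conditions on `(a, b)`
given by distinct points of the projective line, so any two of them force `a = b = 0`, and then
every coordinate vanishes.
-/

open Function

theorem eq_zero_iff_of_add_sq_eq_zero {R : Type*} [Ring R] [NoZeroDivisors R] {y z : R}
    (h : z + y ^ 2 = 0) : y = 0 ↔ z = 0 := by
  rw [← pow_eq_zero_iff two_ne_zero, eq_neg_of_add_eq_zero_right h, neg_eq_zero]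

theorem Fin.eq_of_apply_eq_zero_of_pencil {R : Type*} [CommRing R] [NoZeroDivisors R] {n : ℕ}
    {c : Fin n → R} (hc : Injective c) {a b : R} {x : Fin (n + 1) → R} (hx : x ≠ 0)
    (h0 : x 0 = 0 ↔ a = 0) (hsucc : ∀ k, x k.succ = 0 ↔ c k * a + b = 0)
    {i j : Fin (n + 1)} (hi : x i = 0) (hj : x j = 0) : i = j := by
  have ha_ne : ∀ k : Fin n, x k.succ = 0 → a ≠ 0 := fun k hk ha => by
    have hb : b = 0 := by simpa [ha] using (hsucc k).1 hk
    exact hx <| funext fun i => i.cases (h0.2 ha) fun l => (hsucc l).2 (by simp [ha, hb])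
  cases i using Fin.cases with
  | zero =>
    cases j using Fin.cases with
    | zero => rfl
    | succ l => exact absurd (h0.1 hi) (ha_ne l hj)
  | succ k =>
    cases j using Fin.cases with
    | zero => exact absurd (h0.1 hj) (ha_ne k hi)
    | succ l =>
      have hkl : (c k - c l) * a = 0 := by
        linear_combination (hsucc k).1 hi - (hsucc l).1 hj
      rw [mul_eq_zero, sub_eq_zero] at hkl
      exact congrArg Fin.succ (hc (hkl.resolve_right (ha_ne k hi)))

/-- At any nonzero solution of the five quadrics defining `Ŝ_μ`, at most one of
the seven coordinates vanishes. -/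
theorem at_most_one_zero_coordinate (μ₄ μ₅ μ₆ μ₇ : ℂ)
    (h01 : ∀ μ ∈ ({μ₄, μ₅, μ₆, μ₇} : Set ℂ), μ ≠ 0 ∧ μ ≠ 1)
    (hdist : μ₄ ≠ μ₅ ∧ μ₄ ≠ μ₆ ∧ μ₄ ≠ μ₇ ∧ μ₅ ≠ μ₆ ∧ μ₅ ≠ μ₇ ∧ μ₆ ≠ μ₇)
    (x : Fin 7 → ℂ) (hx : x ≠ 0)
    (h1 : x 0 ^ 2 + x 1 ^ 2 + x 2 ^ 2 = 0)
    (h2 : μ₄ * x 0 ^ 2 + x 1 ^ 2 + x 3 ^ 2 = 0)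
    (h3 : μ₅ * x 0 ^ 2 + x 1 ^ 2 + x 4 ^ 2 = 0)
    (h4 : μ₆ * x 0 ^ 2 + x 1 ^ 2 + x 5 ^ 2 = 0)
    (h5 : μ₇ * x 0 ^ 2 + x 1 ^ 2 + x 6 ^ 2 = 0) :
    ∀ i j : Fin 7, x i = 0 → x j = 0 → i = j := by
  have hc : Injective ![0, 1, μ₄, μ₅, μ₆, μ₇] := by
    obtain ⟨⟨h40, h41⟩, ⟨h50, h51⟩, ⟨h60, h61⟩, ⟨h70, h71⟩⟩ :
        (μ₄ ≠ 0 ∧ μ₄ ≠ 1) ∧ (μ₅ ≠ 0 ∧ μ₅ ≠ 1) ∧ (μ₆ ≠ 0 ∧ μ₆ ≠ 1) ∧ (μ₇ ≠ 0 ∧ μ₇ ≠ 1) := by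
      simpa using h01
    obtain ⟨d45, d46, d47, d56, d57, d67⟩ := hdist
    intro k l
    fin_cases k <;> fin_cases l <;> simp [*, Ne.symm, eq_comm]
  have hsucc : ∀ k : Fin 6, x k.succ = 0 ↔ ![0, 1, μ₄, μ₅, μ₆, μ₇] k * x 0 ^ 2 + x 1 ^ 2 = 0 := by
    intro k
    fin_cases k
    · simp
    · exact eq_zero_iff_of_add_sq_eq_zero (by simpa using h1)
    · exact eq_zero_iff_of_add_sq_eq_zero h2
    · exact eq_zero_iff_of_add_sq_eq_zero h3
    · exact eq_zero_iff_of_add_sq_eq_zero h4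
    · exact eq_zero_iff_of_add_sq_eq_zero h5
  intro i j hi hj
  exact Fin.eq_of_apply_eq_zero_of_pencil hc hx (pow_eq_zero_iff two_ne_zero).symm hsucc hi hj
end
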